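/- arXiv:2603.07230 — 3 statements merged into one kernel-verified Lean document; each statement's English description precedes it below -/
import Mathlib

section
/- Let (Ω, 𝒜, P) be a probability space, let X be a random element of a standard Borel space S, let Y be a real random variable, and let κ : S → Measure(ℝ) be a regular conditional distribution of Y given X, i.e., a Markov kernel such that the joint law of (X,Y) equals ∫ δ_x ⊗ κ(x) d(law of X)(x). Assume that for (law of X)-almost every x the probability measure κ(x) is atomless. Define U := F(X, Y), where F(x, y) := κ(x)((−∞, y]). Then the conditional distribution of U given X = x is the uniform distribution on [0,1] for (law of X)-almost every x; in particular, U is uniformly distributed on [0,1] and U is independent of X. -/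
/-! The cdf `F` of an atomless law `μ` on `ℝ` is continuous, so for `0 < t < 1` the set `{F ≤ t}`
is a closed half-line `Iic a`, and `F a = t` because `t` is a value of `F` (intermediate value
theorem). Hence `μ {F ≤ t} = t`, i.e. `F` pushes `μ` forward to the uniform law on `[0,1]`.
Applied to every fibre `κ x` of the disintegration, this shows that `(X, U)` has law
`law X ⊗ Unif[0,1]`, which gives both the law of `U` and its independence from `X`. -/

open MeasureTheory ProbabilityTheory Set Filter

namespace ProbabilityTheory

section Cdf

variable {μ : Measure ℝ} [IsProbabilityMeasure μ]

theorem continuous_cdf [NullSingletonClass μ] : Continuous (cdf μ) := by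
  refine continuous_iff_continuousAt.2 fun a => ?_
  have h_jump : ENNReal.ofReal (cdf μ a - Function.leftLim (cdf μ) a) = 0 := by
    rw [← (cdf μ).measure_singleton, measure_cdf, measure_singleton]
  rw [ENNReal.ofReal_eq_zero] at h_jump
  rw [(monotone_cdf μ).continuousAt_iff_leftLim_eq_rightLim, (cdf μ).rightLim_eq]
  exact le_antisymm ((monotone_cdf μ).leftLim_le le_rfl) (by linarith)

theorem measure_setOf_cdf_le [NullSingletonClass μ] (t : ℝ) :
    μ {y | cdf μ y ≤ t} = ENNReal.ofReal (min t 1) := by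
  rcases lt_or_ge t 0 with ht0 | ht0
  · have : {y | cdf μ y ≤ t} = ∅ :=
      eq_empty_of_forall_notMem fun y hy => (cdf_nonneg μ y).not_gt (hy.trans_lt ht0)
    rw [this, measure_empty, ENNReal.ofReal_of_nonpos (min_le_of_left_le ht0.le)]
  rcases le_or_gt 1 t with ht1 | ht1
  · have : {y | cdf μ y ≤ t} = univ := eq_univ_of_forall fun y => (cdf_le_one μ y).trans ht1
    rw [this, measure_univ, min_eq_right ht1, ENNReal.ofReal_one]
  rw [min_eq_left ht1.le]
  set s := {y | cdf μ y ≤ t}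
  have h_closed : IsClosed s := isClosed_le continuous_cdf continuous_const
  obtain ⟨b, hb⟩ := ((tendsto_cdf_atTop μ).eventually (eventually_gt_nhds ht1)).exists
  have h_bdd : BddAbove s := ⟨b, fun y hy => ((monotone_cdf μ).reflect_lt (hy.trans_lt hb)).le⟩
  refine le_antisymm ?_ ?_
  · rcases s.eq_empty_or_nonempty with h_empty | h_ne
    · simp [h_empty]
    calc μ s ≤ μ (Iic (sSup s)) := measure_mono fun y hy => le_csSup h_bdd hy
      _ = ENNReal.ofReal (cdf μ (sSup s)) := (ofReal_cdf μ _).symm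
      _ ≤ ENNReal.ofReal t := ENNReal.ofReal_le_ofReal (h_closed.csSup_mem h_ne h_bdd)
  · rcases ht0.eq_or_lt with rfl | ht0
    · simp
    obtain ⟨a, ha⟩ := ((tendsto_cdf_atBot μ).eventually (eventually_lt_nhds ht0)).exists
    obtain ⟨y, hy⟩ := intermediate_value_univ a b continuous_cdf ⟨ha.le, hb.le⟩
    calc ENNReal.ofReal t = μ (Iic y) := by rw [← hy, ofReal_cdf]
      _ ≤ μ s := measure_mono fun z hz => ((monotone_cdf μ hz).trans hy.le)

theorem map_cdf_eq_uniform [NullSingletonClass μ] :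
    μ.map (cdf μ) = volume.restrict (Icc 0 1) := by
  have h_meas : Measurable (cdf μ) := (monotone_cdf μ).measurable
  have := Measure.isProbabilityMeasure_map (μ := μ) h_meas.aemeasurable
  refine Measure.ext_of_Iic _ _ fun t => ?_
  have h_inter : Iic t ∩ Icc (0 : ℝ) 1 = Icc 0 (min t 1) := by
    ext x; simp only [mem_inter_iff, mem_Iic, mem_Icc, le_min_iff]; tauto
  rw [Measure.map_apply h_meas measurableSet_Iic, Measure.restrict_apply measurableSet_Iic,
    h_inter, Real.volume_Icc, sub_zero]
  exact measure_setOf_cdf_le t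

end Cdf

theorem measurable_cdf_kernel {α : Type*} [MeasurableSpace α] (κ : Kernel α ℝ)
    [IsMarkovKernel κ] :
    Measurable fun p : α × ℝ => cdf (κ p.1) p.2 := by
  have h_le : MeasurableSet {q : (α × ℝ) × ℝ | q.2 ≤ q.1.2} :=
    measurableSet_le measurable_snd measurable_fst.snd
  have h_Iic : Measurable fun p : α × ℝ => κ p.1 (Iic p.2) :=
    Kernel.measurable_kernel_prodMk_left (κ := Kernel.prodMkRight ℝ κ) h_le
  simpa only [cdf_eq_real, measureReal_def] using h_Iic.ennreal_toReal

end ProbabilityTheory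

namespace MeasureTheory.Measure

variable {α β γ : Type*} [MeasurableSpace α] [MeasurableSpace β] [MeasurableSpace γ]

theorem compProd_map_prodMk_eq_prod {μ : Measure α} [SigmaFinite μ] {κ : Kernel α β}
    [IsSFiniteKernel κ] {g : α × β → γ} (hg : Measurable g) {ν : Measure γ} [SigmaFinite ν]
    (h : ∀ᵐ x ∂μ, (κ x).map (fun y => g (x, y)) = ν) :
    (μ ⊗ₘ κ).map (fun p => (p.1, g p)) = μ.prod ν := by
  have hf : Measurable fun p : α × β => (p.1, g p) := measurable_fst.prodMk hg
  refine (prod_eq fun s t hs ht => ?_).symm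
  have h_section (x : α) : κ x (Prod.mk x ⁻¹' ((fun p => (p.1, g p)) ⁻¹' s ×ˢ t)) =
      s.indicator (fun x => (κ x).map (fun y => g (x, y)) t) x := by
    by_cases hx : x ∈ s
    · rw [indicator_of_mem hx, map_apply (by fun_prop) ht]
      congr 1
      ext y
      simp [hx]
    · rw [indicator_of_notMem hx]
      convert measure_empty (μ := κ x)
      ext y
      simp [hx]
  rw [map_apply hf (hs.prod ht), compProd_apply (hf (hs.prod ht))]
  simp_rw [h_section]
  rw [lintegral_indicator hs, setLIntegral_congr_fun_ae hs (h.mono fun x hx _ => by rw [hx]),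
    setLIntegral_const, mul_comm]

end MeasureTheory.Measure

theorem conditional_rank_uniform_indep_general {Ω : Type*} [MeasurableSpace Ω]
    {P : Measure Ω} [IsProbabilityMeasure P]
    {S : Type*} [MeasurableSpace S]
    (X : Ω → S) (hX : Measurable X) (Y : Ω → ℝ) (hY : Measurable Y)
    (κ : Kernel S ℝ) [IsMarkovKernel κ]
    (hdisint : Measure.map (fun ω => (X ω, Y ω)) P = (Measure.map X P) ⊗ₘ κ)
    (hatomless : ∀ᵐ x ∂(Measure.map X P), ∀ y : ℝ, κ x {y} = 0)
    (U : Ω → ℝ) (hU : ∀ ω, U ω = (κ (X ω) (Set.Iic (Y ω))).toReal) :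
    Measure.map (fun ω => (X ω, U ω)) P =
        (Measure.map X P) ⊗ₘ (Kernel.const S (volume.restrict (Set.Icc (0 : ℝ) 1))) ∧
      Measure.map U P = volume.restrict (Set.Icc (0 : ℝ) 1) ∧
      IndepFun U X P := by
  have := Measure.isProbabilityMeasure_map (μ := P) hX.aemeasurable
  have hU_eq : U = fun ω => cdf (κ (X ω)) (Y ω) := funext fun ω => by
    rw [hU, cdf_eq_real, measureReal_def]
  have hUm : Measurable U := hU_eq ▸ (measurable_cdf_kernel κ).comp (hX.prodMk hY)
  have h_cond : ∀ᵐ x ∂(Measure.map X P), (κ x).map (cdf (κ x)) = volume.restrict (Icc 0 1) := by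
    filter_upwards [hatomless] with x hx
    have : NullSingletonClass (κ x) := ⟨hx⟩
    exact map_cdf_eq_uniform
  have h_joint : Measure.map (fun ω => (X ω, U ω)) P =
      (Measure.map X P).prod (volume.restrict (Icc 0 1)) := by
    rw [← Measure.compProd_map_prodMk_eq_prod (measurable_cdf_kernel κ) h_cond, ← hdisint,
      Measure.map_map (measurable_fst.prodMk (measurable_cdf_kernel κ)) (hX.prodMk hY), hU_eq]
    rfl
  have h_law : Measure.map U P = volume.restrict (Icc 0 1) := by
    rw [← Measure.snd_map_prodMk hX, h_joint, Measure.snd_prod]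
  refine ⟨by rw [Measure.compProd_const, h_joint], h_law, IndepFun.symm ?_⟩
  rwa [indepFun_iff_map_prod_eq_prod_map_map hX.aemeasurable hUm.aemeasurable, h_law]

/-- conditional probability integral transform. Let `X` be a random element
of a standard Borel space `S`, `Y` a real random variable, and `κ` a Markov kernel which is
a regular conditional distribution of `Y` given `X`, i.e. the joint law of `(X,Y)` is
`(law X) ⊗ₘ κ`. If `κ x` is atomless for `(law X)`-a.e. `x`, then with
`U = F(X,Y)` where `F(x,y) = κ x (−∞, y]`, the conditional distribution of `U` given `X`
is the uniform distribution on `[0,1]` (i.e. the joint law of `(X,U)` is the product of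
`law X` with `Unif[0,1]`); in particular `U ∼ Unif[0,1]` and `U` is independent of `X`. -/
theorem conditional_rank_uniform_indep {Ω : Type*} [MeasurableSpace Ω]
    {P : Measure Ω} [IsProbabilityMeasure P]
    {S : Type*} [MeasurableSpace S] [StandardBorelSpace S]
    (X : Ω → S) (hX : Measurable X) (Y : Ω → ℝ) (hY : Measurable Y)
    (κ : Kernel S ℝ) [IsMarkovKernel κ]
    (hdisint : Measure.map (fun ω => (X ω, Y ω)) P = (Measure.map X P) ⊗ₘ κ)
    (hatomless : ∀ᵐ x ∂(Measure.map X P), ∀ y : ℝ, κ x {y} = 0)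
    (U : Ω → ℝ) (hU : ∀ ω, U ω = (κ (X ω) (Set.Iic (Y ω))).toReal) :
    Measure.map (fun ω => (X ω, U ω)) P =
        (Measure.map X P) ⊗ₘ (Kernel.const S (volume.restrict (Set.Icc (0 : ℝ) 1))) ∧
      Measure.map U P = volume.restrict (Set.Icc (0 : ℝ) 1) ∧
      IndepFun U X P :=
  conditional_rank_uniform_indep_general X hX Y hY κ hdisint hatomless U hU
end

section
/- Let n ≥ 1 and let a_i, â_i, b_i, b̂_i ∈ [0,1] for i = 1, …, n be reals, and write ā = (1/n)Σ_{i=1}^n a_i and likewise for the other sample means. Then | (1/n)Σ_{i=1}^n (â_i − mean(â))(b̂_i − mean(b̂)) − (1/n)Σ_{i=1}^n (a_i − ā)(b_i − b̄) | ≤ 2·[ (1/n)Σ_{i=1}^n |â_i − a_i| + (1/n)Σ_{i=1}^n |b̂_i − b_i| ]. -/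
/-- Key identity: demeaned cross moment equals raw moment minus product of means. -/
lemma demean_identity (n : ℕ) (hn : 1 ≤ n) (x y : ℕ → ℝ) :
    (1 / (n : ℝ)) * ∑ i ∈ Finset.range n,
        ((x i - (1 / (n : ℝ)) * ∑ j ∈ Finset.range n, x j) *
          (y i - (1 / (n : ℝ)) * ∑ j ∈ Finset.range n, y j)) =
    (1 / (n : ℝ)) * ∑ i ∈ Finset.range n, x i * y i -
      ((1 / (n : ℝ)) * ∑ j ∈ Finset.range n, x j) *
        ((1 / (n : ℝ)) * ∑ j ∈ Finset.range n, y j) := by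
  have hN : (0 : ℝ) < (n : ℝ) := by exact_mod_cast hn
  have hN0 : (n : ℝ) ≠ 0 := ne_of_gt hN
  set Sx := ∑ j ∈ Finset.range n, x j with hSx
  set Sy := ∑ j ∈ Finset.range n, y j with hSy
  have hexp : ∑ i ∈ Finset.range n,
      ((x i - (1 / (n : ℝ)) * Sx) * (y i - (1 / (n : ℝ)) * Sy)) =
      (∑ i ∈ Finset.range n, x i * y i) - (1 / (n : ℝ)) * Sy * Sx
        - (1 / (n : ℝ)) * Sx * Sy + (n : ℝ) * ((1 / (n : ℝ)) * Sx * ((1 / (n : ℝ)) * Sy)) := by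
    have : ∀ i ∈ Finset.range n,
        (x i - (1 / (n : ℝ)) * Sx) * (y i - (1 / (n : ℝ)) * Sy) =
        x i * y i - (1 / (n : ℝ)) * Sy * x i - (1 / (n : ℝ)) * Sx * y i
          + (1 / (n : ℝ)) * Sx * ((1 / (n : ℝ)) * Sy) := by
      intro i _; ring
    rw [Finset.sum_congr rfl this]
    simp only [Finset.sum_add_distrib, Finset.sum_sub_distrib, ← Finset.mul_sum,
      Finset.sum_const, Finset.card_range, nsmul_eq_mul]
    rw [← hSx, ← hSy]
    field_simp
  rw [hexp]
  field_simp
  ring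

/-- deterministic perturbation bound for demeaned sample cross-moments.
For `n ≥ 1` and reals `a_i, â_i, b_i, b̂_i ∈ [0,1]`,
`| (1/n)Σ (â_i − mean â)(b̂_i − mean b̂) − (1/n)Σ (a_i − mean a)(b_i − mean b) |
  ≤ 2 [ (1/n)Σ |â_i − a_i| + (1/n)Σ |b̂_i − b_i| ]`. -/
theorem demeaned_cross_moment_perturbation (n : ℕ) (hn : 1 ≤ n)
    (a ahat b bhat : ℕ → ℝ)
    (ha : ∀ i < n, a i ∈ Set.Icc (0 : ℝ) 1) (hahat : ∀ i < n, ahat i ∈ Set.Icc (0 : ℝ) 1)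
    (hb : ∀ i < n, b i ∈ Set.Icc (0 : ℝ) 1) (hbhat : ∀ i < n, bhat i ∈ Set.Icc (0 : ℝ) 1) :
    |(1 / (n : ℝ)) * ∑ i ∈ Finset.range n,
        ((ahat i - (1 / (n : ℝ)) * ∑ j ∈ Finset.range n, ahat j) *
          (bhat i - (1 / (n : ℝ)) * ∑ j ∈ Finset.range n, bhat j)) -
      (1 / (n : ℝ)) * ∑ i ∈ Finset.range n,
        ((a i - (1 / (n : ℝ)) * ∑ j ∈ Finset.range n, a j) *
          (b i - (1 / (n : ℝ)) * ∑ j ∈ Finset.range n, b j))| ≤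
      2 * ((1 / (n : ℝ)) * ∑ i ∈ Finset.range n, |ahat i - a i| +
        (1 / (n : ℝ)) * ∑ i ∈ Finset.range n, |bhat i - b i|) := by
  have hN : (0 : ℝ) < (n : ℝ) := by exact_mod_cast hn
  have hN0 : (n : ℝ) ≠ 0 := ne_of_gt hN
  have hNinv : (0 : ℝ) ≤ 1 / (n : ℝ) := by positivity
  rw [demean_identity n hn ahat bhat, demean_identity n hn a b]
  set MA := (1 / (n : ℝ)) * ∑ j ∈ Finset.range n, a j with hMA
  set MAh := (1 / (n : ℝ)) * ∑ j ∈ Finset.range n, ahat j with hMAh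
  set MB := (1 / (n : ℝ)) * ∑ j ∈ Finset.range n, b j with hMB
  set MBh := (1 / (n : ℝ)) * ∑ j ∈ Finset.range n, bhat j with hMBh
  set Ea := (1 / (n : ℝ)) * ∑ i ∈ Finset.range n, |ahat i - a i| with hEa
  set Eb := (1 / (n : ℝ)) * ∑ i ∈ Finset.range n, |bhat i - b i| with hEb
  -- mean of values in [0,1] lies in [0,1]
  have mean_mem : ∀ x : ℕ → ℝ, (∀ i < n, x i ∈ Set.Icc (0:ℝ) 1) →
      (1 / (n : ℝ)) * ∑ j ∈ Finset.range n, x j ∈ Set.Icc (0:ℝ) 1 := by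
    intro x hx
    constructor
    · apply mul_nonneg hNinv
      exact Finset.sum_nonneg fun i hi => (hx i (Finset.mem_range.mp hi)).1
    · have : ∑ j ∈ Finset.range n, x j ≤ ∑ j ∈ Finset.range n, (1:ℝ) :=
        Finset.sum_le_sum fun i hi => (hx i (Finset.mem_range.mp hi)).2
      have h2 : ∑ j ∈ Finset.range n, (1:ℝ) = (n:ℝ) := by simp
      calc (1 / (n : ℝ)) * ∑ j ∈ Finset.range n, x j
          ≤ (1 / (n : ℝ)) * (n:ℝ) := by
            apply mul_le_mul_of_nonneg_left _ hNinv
            rw [← h2]; exact this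
        _ = 1 := by field_simp
  have hMAm := mean_mem a ha
  have hMAhm := mean_mem ahat hahat
  have hMBm := mean_mem b hb
  have hMBhm := mean_mem bhat hbhat
  -- bound on product differences: if all four in [0,1]
  have prod_diff : ∀ p q r s : ℝ, p ∈ Set.Icc (0:ℝ) 1 → q ∈ Set.Icc (0:ℝ) 1 →
      r ∈ Set.Icc (0:ℝ) 1 → s ∈ Set.Icc (0:ℝ) 1 →
      |p * q - r * s| ≤ |p - r| + |q - s| := by
    intro p q r s hp hq hr hs
    have : p * q - r * s = (p - r) * q + r * (q - s) := by ring
    rw [this]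
    calc |(p - r) * q + r * (q - s)| ≤ |(p - r) * q| + |r * (q - s)| := abs_add_le _ _
      _ = |p - r| * |q| + |r| * |q - s| := by rw [abs_mul, abs_mul]
      _ ≤ |p - r| * 1 + 1 * |q - s| := by
          apply add_le_add
          · exact mul_le_mul_of_nonneg_left (abs_le.mpr ⟨by linarith [hq.1], hq.2⟩) (abs_nonneg _)
          · exact mul_le_mul_of_nonneg_right (abs_le.mpr ⟨by linarith [hr.1], hr.2⟩) (abs_nonneg _)
      _ = |p - r| + |q - s| := by ring
  -- bound on the raw cross moment difference
  have h1 : |(1 / (n : ℝ)) * ∑ i ∈ Finset.range n, ahat i * bhat i -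
      (1 / (n : ℝ)) * ∑ i ∈ Finset.range n, a i * b i| ≤ Ea + Eb := by
    rw [← mul_sub, ← Finset.sum_sub_distrib, abs_mul, abs_of_nonneg hNinv]
    have hsum : |∑ i ∈ Finset.range n, (ahat i * bhat i - a i * b i)| ≤
        ∑ i ∈ Finset.range n, (|ahat i - a i| + |bhat i - b i|) := by
      calc |∑ i ∈ Finset.range n, (ahat i * bhat i - a i * b i)|
          ≤ ∑ i ∈ Finset.range n, |ahat i * bhat i - a i * b i| :=
            Finset.abs_sum_le_sum_abs _ _
        _ ≤ ∑ i ∈ Finset.range n, (|ahat i - a i| + |bhat i - b i|) := by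
            apply Finset.sum_le_sum
            intro i hi
            have hi' := Finset.mem_range.mp hi
            exact prod_diff _ _ _ _ (hahat i hi') (hbhat i hi') (ha i hi') (hb i hi')
    calc (1 / (n : ℝ)) * |∑ i ∈ Finset.range n, (ahat i * bhat i - a i * b i)|
        ≤ (1 / (n : ℝ)) * ∑ i ∈ Finset.range n, (|ahat i - a i| + |bhat i - b i|) :=
          mul_le_mul_of_nonneg_left hsum hNinv
      _ = Ea + Eb := by rw [Finset.sum_add_distrib, hEa, hEb]; ring
  -- bound on means difference
  have hma : |MAh - MA| ≤ Ea := by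
    rw [hMAh, hMA, ← mul_sub, ← Finset.sum_sub_distrib, abs_mul, abs_of_nonneg hNinv, hEa]
    exact mul_le_mul_of_nonneg_left (Finset.abs_sum_le_sum_abs _ _) hNinv
  have hmb : |MBh - MB| ≤ Eb := by
    rw [hMBh, hMB, ← mul_sub, ← Finset.sum_sub_distrib, abs_mul, abs_of_nonneg hNinv, hEb]
    exact mul_le_mul_of_nonneg_left (Finset.abs_sum_le_sum_abs _ _) hNinv
  have h2 : |MAh * MBh - MA * MB| ≤ Ea + Eb := by
    calc |MAh * MBh - MA * MB| ≤ |MAh - MA| + |MBh - MB| :=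
          prod_diff _ _ _ _ hMAhm hMBhm hMAm hMBm
      _ ≤ Ea + Eb := add_le_add hma hmb
  calc |(1 / (n : ℝ)) * ∑ i ∈ Finset.range n, ahat i * bhat i - MAh * MBh -
        ((1 / (n : ℝ)) * ∑ i ∈ Finset.range n, a i * b i - MA * MB)|
      = |((1 / (n : ℝ)) * ∑ i ∈ Finset.range n, ahat i * bhat i -
          (1 / (n : ℝ)) * ∑ i ∈ Finset.range n, a i * b i) + (MA * MB - MAh * MBh)| := by
        ring_nf
    _ ≤ |(1 / (n : ℝ)) * ∑ i ∈ Finset.range n, ahat i * bhat i -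
          (1 / (n : ℝ)) * ∑ i ∈ Finset.range n, a i * b i| + |MA * MB - MAh * MBh| :=
        abs_add_le _ _
    _ ≤ (Ea + Eb) + (Ea + Eb) := by
        apply add_le_add h1
        rw [abs_sub_comm]; exact h2
    _ = 2 * (Ea + Eb) := by ring
end

section
/- Let (U_i, V_i), i ≥ 1, be i.i.d. random vectors taking values in [0,1]² with E[U₁] = E[V₁] = 1/2 and Var(U₁) = Var(V₁) = 1/12, and set ρ_C := 12·E[(U₁ − 1/2)(V₁ − 1/2)]. For each n, let Û₁, …, Û_n and V̂₁, …, V̂_n be [0,1]-valued random variables (on the same probability space) such that (1/n)Σ_{i=1}^n |Û_i − U_i| → 0 in probability and (1/n)Σ_{i=1}^n |V̂_i − V_i| → 0 in probability. Then each of the following three estimators converges in probability to ρ_C as n → ∞: (i) the OLS slope ρ̂_C = Σ_i (Û_i − mean(Û))(V̂_i − mean(V̂)) / Σ_i (V̂_i − mean(V̂))², (ii) the sample correlation ρ̃_C = Σ_i (Û_i − mean(Û))(V̂_i − mean(V̂)) / √( Σ_i (Û_i − mean(Û))² · Σ_i (V̂_i − mean(V̂))² ), and (iii) the covariance form ρ̆_C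 = (12/n)Σ_i (Û_i − 1/2)(V̂_i − 1/2). -/
/-!
By the strong law of large numbers the sample moments of the true ranks converge to their
population values: the means to `1/2`, the second moments about `1/2` to `1/12` and the cross
moment to `ρ_C / 12`. Since all ranks lie in `[0,1]`, replacing the true ranks by their estimates,
and the centring `1/2` by the estimated sample means, moves each averaged product by at most the
average rank errors plus the centring errors, so the plug-in moments have the same limits. The
three estimators are continuous functions of these moments at a point where the denominators are
`1/12 ≠ 0`.
-/

open MeasureTheory ProbabilityTheory Filter Topology

namespace MeasureTheory

variable {α ι E : Type*} {m : MeasurableSpace α} {μ : Measure α} {l : Filter ι}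

theorem tendsto_measure_zero_of_subset {s t : ι → Set α} (hst : ∀ i, s i ⊆ t i)
    (ht : Tendsto (fun i => μ (t i)) l (𝓝 0)) : Tendsto (fun i => μ (s i)) l (𝓝 0) :=
  tendsto_of_tendsto_of_tendsto_of_le_of_le tendsto_const_nhds ht (fun _ => zero_le)
    fun i => measure_mono (hst i)

theorem tendsto_measure_zero_of_subset_union {s t u : ι → Set α} (hs : ∀ i, s i ⊆ t i ∪ u i)
    (ht : Tendsto (fun i => μ (t i)) l (𝓝 0)) (hu : Tendsto (fun i => μ (u i)) l (𝓝 0)) :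
    Tendsto (fun i => μ (s i)) l (𝓝 0) := by
  refine tendsto_of_tendsto_of_tendsto_of_le_of_le tendsto_const_nhds (by simpa using ht.add hu)
    (fun _ => zero_le) fun i => (measure_mono (hs i)).trans (measure_union_le _ _)

theorem tendstoInMeasure_const_iff_lt {f : ι → α → ℝ} {c : ℝ} :
    TendstoInMeasure μ f l (fun _ => c) ↔
      ∀ ε > 0, Tendsto (fun i => μ {x | ε < |f i x - c|}) l (𝓝 0) := by
  simp only [tendstoInMeasure_iff_dist, Real.dist_eq]
  refine ⟨fun h ε hε => tendsto_measure_zero_of_subset (fun _ _ hx => ?_) (h ε hε),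
    fun h ε hε => tendsto_measure_zero_of_subset (fun _ _ hx => ?_) (h (ε / 2) (by positivity))⟩
  · exact le_of_lt (Set.mem_ofPred.mp hx)
  · exact (half_lt_self hε).trans_le (Set.mem_ofPred.mp hx)

theorem tendstoInMeasure_zero_iff_lt_of_nonneg {f : ι → α → ℝ} (hf : ∀ i x, 0 ≤ f i x) :
    TendstoInMeasure μ f l (fun _ => 0) ↔
      ∀ ε > 0, Tendsto (fun i => μ {x | ε < f i x}) l (𝓝 0) := by
  simp [tendstoInMeasure_const_iff_lt, abs_of_nonneg, hf]

variable [PseudoMetricSpace E] {F G : Type*} [PseudoMetricSpace F] [PseudoMetricSpace G]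

theorem tendstoInMeasure_const (c : E) : TendstoInMeasure μ (fun _ _ => c) l (fun _ => c) := by
  intro ε hε
  simp [hε.not_ge, tendsto_const_nhds]

theorem TendstoInMeasure.comp₂_of_continuousAt {f : ι → α → E} {g : ι → α → F} {a : E} {b : F}
    {φ : E → F → G} (hφ : ContinuousAt (Function.uncurry φ) (a, b))
    (hf : TendstoInMeasure μ f l (fun _ => a)) (hg : TendstoInMeasure μ g l (fun _ => b)) :
    TendstoInMeasure μ (fun i x => φ (f i x) (g i x)) l (fun _ => φ a b) := by
  rw [tendstoInMeasure_iff_dist] at hf hg ⊢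
  intro ε hε
  obtain ⟨δ, hδ, hφδ⟩ := Metric.continuousAt_iff.mp hφ ε hε
  refine tendsto_measure_zero_of_subset_union (fun i x hx => ?_) (hf δ hδ) (hg δ hδ)
  by_contra hclose
  simp only [Set.mem_union, Set.mem_ofPred_eq, not_or, not_le] at hx hclose
  exact hx.not_gt (hφδ (x := (f i x, g i x)) (by rw [Prod.dist_eq]; exact max_lt hclose.1 hclose.2))

theorem TendstoInMeasure.comp_of_continuousAt {f : ι → α → E} {a : E} {φ : E → F}
    (hφ : ContinuousAt φ a) (hf : TendstoInMeasure μ f l (fun _ => a)) :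
    TendstoInMeasure μ (fun i x => φ (f i x)) l (fun _ => φ a) :=
  hf.comp₂_of_continuousAt (φ := fun x _ => φ x) (hφ.comp continuousAt_fst) hf

theorem TendstoInMeasure.add_of_const {f g : ι → α → ℝ} {a b : ℝ}
    (hf : TendstoInMeasure μ f l (fun _ => a)) (hg : TendstoInMeasure μ g l (fun _ => b)) :
    TendstoInMeasure μ (fun i x => f i x + g i x) l (fun _ => a + b) :=
  hf.comp₂_of_continuousAt continuous_add.continuousAt hg

theorem TendstoInMeasure.of_dist_le {f f' : ι → α → E} {a : E} {h : ι → α → ℝ}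
    (hf : TendstoInMeasure μ f l (fun _ => a)) (hh : TendstoInMeasure μ h l (fun _ => 0))
    (hdist : ∀ i x, dist (f' i x) (f i x) ≤ h i x) : TendstoInMeasure μ f' l (fun _ => a) := by
  rw [tendstoInMeasure_iff_dist] at hf hh ⊢
  intro ε hε
  refine tendsto_measure_zero_of_subset_union (fun i x hx => ?_) (hf (ε / 2) (by positivity))
    (hh (ε / 2) (by positivity))
  by_contra hclose
  simp only [Set.mem_union, Set.mem_ofPred_eq, not_or, not_le, Real.dist_0_eq_abs] at hx hclose
  linarith [dist_triangle (f' i x) (f i x) a, hdist i x, le_abs_self (h i x)]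

end MeasureTheory

noncomputable def sampleMean (n : ℕ) (x : ℕ → ℝ) : ℝ := (∑ i ∈ Finset.range n, x i) / n

noncomputable def sampleCov (n : ℕ) (x y : ℕ → ℝ) : ℝ :=
  sampleMean n fun i => (x i - sampleMean n x) * (y i - sampleMean n y)

section SampleMean

variable {n : ℕ} {x y : ℕ → ℝ}

theorem sampleMean_add : sampleMean n (fun i => x i + y i) = sampleMean n x + sampleMean n y := by
  simp only [sampleMean, Finset.sum_add_distrib, add_div]

theorem sampleMean_sub : sampleMean n (fun i => x i - y i) = sampleMean n x - sampleMean n y := by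
  simp only [sampleMean, Finset.sum_sub_distrib, sub_div]

theorem sampleMean_mono (h : ∀ i, x i ≤ y i) : sampleMean n x ≤ sampleMean n y :=
  div_le_div_of_nonneg_right (Finset.sum_le_sum fun i _ => h i) n.cast_nonneg

theorem sampleMean_const_le {c : ℝ} (hc : 0 ≤ c) : sampleMean n (fun _ => c) ≤ c := by
  rcases eq_or_ne n 0 with rfl | hn
  · simpa [sampleMean] using hc
  · simp [sampleMean, hn]

theorem abs_sampleMean_le : |sampleMean n x| ≤ sampleMean n fun i => |x i| := by
  rw [sampleMean, sampleMean, abs_div, Nat.abs_cast]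
  gcongr
  exact Finset.abs_sum_le_sum_abs _ _

theorem abs_sampleMean_sub_le :
    |sampleMean n x - sampleMean n y| ≤ sampleMean n fun i => |x i - y i| :=
  sampleMean_sub (x := x) (y := y) ▸ abs_sampleMean_le

theorem sampleMean_nonneg (h : ∀ i, 0 ≤ x i) : 0 ≤ sampleMean n x :=
  div_nonneg (Finset.sum_nonneg fun i _ => h i) n.cast_nonneg

theorem sampleMean_mem_Icc (h : ∀ i, x i ∈ Set.Icc (0 : ℝ) 1) :
    sampleMean n x ∈ Set.Icc (0 : ℝ) 1 := by
  refine ⟨sampleMean_nonneg fun i => (h i).1, ?_⟩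
  calc sampleMean n x ≤ sampleMean n fun _ => 1 := sampleMean_mono fun i => (h i).2
    _ ≤ 1 := sampleMean_const_le zero_le_one

theorem sampleMean_div_sampleMean (hn : n ≠ 0) :
    sampleMean n x / sampleMean n y = (∑ i ∈ Finset.range n, x i) / ∑ i ∈ Finset.range n, y i :=
  div_div_div_cancel_right₀ (Nat.cast_ne_zero.mpr hn) _ _

theorem sampleMean_div_sqrt_mul_sampleMean {z : ℕ → ℝ} (hn : n ≠ 0) :
    sampleMean n x / √(sampleMean n y * sampleMean n z) =
      (∑ i ∈ Finset.range n, x i) /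
        √((∑ i ∈ Finset.range n, y i) * ∑ i ∈ Finset.range n, z i) := by
  have hn' : (n : ℝ) ≠ 0 := Nat.cast_ne_zero.mpr hn
  rw [sampleMean, sampleMean, sampleMean, div_mul_div_comm, Real.sqrt_div' _ (by positivity),
    Real.sqrt_mul_self n.cast_nonneg, div_div_div_cancel_right₀ hn']

theorem sampleCov_div_sampleCov (hn : n ≠ 0) :
    sampleCov n x y / sampleCov n y y =
      (∑ i ∈ Finset.range n, (x i - (∑ j ∈ Finset.range n, x j) / n) *
          (y i - (∑ j ∈ Finset.range n, y j) / n)) /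
        ∑ i ∈ Finset.range n, (y i - (∑ j ∈ Finset.range n, y j) / n) ^ 2 := by
  simp only [sq]
  exact sampleMean_div_sampleMean hn

theorem sampleCov_div_sqrt_mul_sampleCov (hn : n ≠ 0) :
    sampleCov n x y / √(sampleCov n x x * sampleCov n y y) =
      (∑ i ∈ Finset.range n, (x i - (∑ j ∈ Finset.range n, x j) / n) *
          (y i - (∑ j ∈ Finset.range n, y j) / n)) /
        √((∑ i ∈ Finset.range n, (x i - (∑ j ∈ Finset.range n, x j) / n) ^ 2) *
          ∑ i ∈ Finset.range n, (y i - (∑ j ∈ Finset.range n, y j) / n) ^ 2) := by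
  simp only [sq]
  exact sampleMean_div_sqrt_mul_sampleMean hn

end SampleMean

theorem abs_sub_le_one_of_mem_Icc {a b : ℝ} (ha : a ∈ Set.Icc (0 : ℝ) 1)
    (hb : b ∈ Set.Icc (0 : ℝ) 1) : |a - b| ≤ 1 :=
  abs_sub_le_of_nonneg_of_le ha.1 ha.2 hb.1 hb.2

theorem abs_mul_sub_mul_le {a b a' b' : ℝ} (hb : |b| ≤ 1) (ha' : |a'| ≤ 1) :
    |a * b - a' * b'| ≤ |a - a'| + |b - b'| :=
  calc |a * b - a' * b'| = |(a - a') * b + a' * (b - b')| := by ring_nf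
    _ ≤ |a - a'| * |b| + |a'| * |b - b'| := by
      rw [← abs_mul, ← abs_mul]; exact abs_add_le _ _
    _ ≤ |a - a'| * 1 + 1 * |b - b'| := by gcongr
    _ = |a - a'| + |b - b'| := by ring

theorem abs_sampleMean_centered_mul_sub_le {n : ℕ} {x y x' y' : ℕ → ℝ} {c d c' d' : ℝ}
    (hy : ∀ i, |y i - d| ≤ 1) (hx' : ∀ i, |x' i - c'| ≤ 1) :
    |(sampleMean n fun i => (x i - c) * (y i - d)) -
        sampleMean n fun i => (x' i - c') * (y' i - d')| ≤
      (sampleMean n fun i => |x i - x' i|) + |c - c'| +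
        ((sampleMean n fun i => |y i - y' i|) + |d - d'|) := by
  have hcentered : ∀ {u u' : ℕ → ℝ} {e e' : ℝ},
      (sampleMean n fun i => |(u i - e) - (u' i - e')|) ≤
        (sampleMean n fun i => |u i - u' i|) + |e - e'| := fun {u u' e e'} =>
    calc (sampleMean n fun i => |(u i - e) - (u' i - e')|)
        ≤ sampleMean n (fun i => |u i - u' i| + |e - e'|) :=
          sampleMean_mono fun i => by rw [sub_sub_sub_comm]; exact abs_sub _ _
      _ ≤ _ := sampleMean_add (x := fun i => |u i - u' i|) ▸ by
          gcongr; exact sampleMean_const_le (abs_nonneg _)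
  calc _ ≤ sampleMean n fun i => |(x i - c) * (y i - d) - (x' i - c') * (y' i - d')| :=
        abs_sampleMean_sub_le
    _ ≤ sampleMean n fun i => |(x i - c) - (x' i - c')| + |(y i - d) - (y' i - d')| :=
        sampleMean_mono fun i => abs_mul_sub_mul_le (hy i) (hx' i)
    _ ≤ _ := by rw [sampleMean_add]; exact add_le_add hcentered hcentered

section Probability

variable {Ω : Type*} [MeasurableSpace Ω] {μ : Measure Ω}

theorem tendstoInMeasure_sampleMean_of_identDistrib [IsFiniteMeasure μ] {X : ℕ → Ω → ℝ}
    (hint : Integrable (X 0) μ) (hindep : Pairwise (Function.onFun (IndepFun · · μ) X))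
    (hident : ∀ i, IdentDistrib (X i) (X 0) μ μ) :
    TendstoInMeasure μ (fun n ω => sampleMean n fun i => X i ω) atTop (fun _ => μ[X 0]) :=
  tendstoInMeasure_of_tendsto_ae
    (fun n => ((Finset.aemeasurable_sum (Finset.range n) fun i _ =>
      (hident i).aemeasurable_fst).div_const (n : ℝ)).aestronglyMeasurable.congr
        (ae_of_all _ fun ω => by simp [sampleMean]))
    (strong_law_ae_real X hint hindep hident)

theorem tendstoInMeasure_sampleMean_comp_of_iIndepFun [IsFiniteMeasure μ] {E : Type*}
    [TopologicalSpace E] [MeasurableSpace E] [OpensMeasurableSpace E] {Z : ℕ → Ω → E}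
    (hindep : iIndepFun Z μ) (hident : ∀ i, IdentDistrib (Z i) (Z 0) μ μ) {K : Set E}
    (hK : IsCompact K) (hZK : ∀ᵐ ω ∂μ, Z 0 ω ∈ K) {φ : E → ℝ} (hφ : Continuous φ) :
    TendstoInMeasure μ (fun n ω => sampleMean n fun i => φ (Z i ω)) atTop
      (fun _ => ∫ ω, φ (Z 0 ω) ∂μ) := by
  obtain ⟨C, hC⟩ := hK.exists_bound_of_continuousOn hφ.continuousOn
  refine tendstoInMeasure_sampleMean_of_identDistrib (X := fun i ω => φ (Z i ω)) ?_
    (fun i j hij => (hindep.indepFun hij).comp hφ.measurable hφ.measurable)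
    (fun i => (hident i).comp hφ.measurable)
  exact Integrable.of_bound (hφ.measurable.comp_aemeasurable
    (hident 0).aemeasurable_fst).aestronglyMeasurable C (hZK.mono fun ω hω => hC _ hω)

variable {X Y : ℕ → Ω → ℝ} {Xhat Yhat : ℕ → ℕ → Ω → ℝ}

theorem tendstoInMeasure_sampleMean_of_err {a : ℝ}
    (hX : TendstoInMeasure μ (fun n ω => sampleMean n fun i => X i ω) atTop (fun _ => a))
    (hXerr : TendstoInMeasure μ (fun n ω => sampleMean n fun i => |Xhat n i ω - X i ω|) atTop
      (fun _ => 0)) :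
    TendstoInMeasure μ (fun n ω => sampleMean n fun i => Xhat n i ω) atTop (fun _ => a) :=
  hX.of_dist_le hXerr fun _ _ => abs_sampleMean_sub_le

theorem tendstoInMeasure_sampleMean_centered_mul_of_err {C D : ℕ → Ω → ℝ} {a b m : ℝ}
    (hYhat : ∀ n i ω, |Yhat n i ω - D n ω| ≤ 1) (hX : ∀ i ω, |X i ω - a| ≤ 1)
    (hXerr : TendstoInMeasure μ (fun n ω => sampleMean n fun i => |Xhat n i ω - X i ω|) atTop
      (fun _ => 0))
    (hYerr : TendstoInMeasure μ (fun n ω => sampleMean n fun i => |Yhat n i ω - Y i ω|) atTop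
      (fun _ => 0))
    (hC : TendstoInMeasure μ C atTop (fun _ => a)) (hD : TendstoInMeasure μ D atTop (fun _ => b))
    (hXY : TendstoInMeasure μ (fun n ω => sampleMean n fun i => (X i ω - a) * (Y i ω - b))
      atTop (fun _ => m)) :
    TendstoInMeasure μ
      (fun n ω => sampleMean n fun i => (Xhat n i ω - C n ω) * (Yhat n i ω - D n ω)) atTop
      (fun _ => m) := by
  have hCa : TendstoInMeasure μ (fun n ω => |C n ω - a|) atTop (fun _ => 0) := by
    simpa using hC.comp_of_continuousAt (φ := fun c => |c - a|) (by fun_prop)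
  have hDb : TendstoInMeasure μ (fun n ω => |D n ω - b|) atTop (fun _ => 0) := by
    simpa using hD.comp_of_continuousAt (φ := fun d => |d - b|) (by fun_prop)
  exact hXY.of_dist_le
    (by simpa using (hXerr.add_of_const hCa).add_of_const (hYerr.add_of_const hDb))
    fun n ω => abs_sampleMean_centered_mul_sub_le (hYhat n · ω) (hX · ω)

theorem tendstoInMeasure_sampleCov_of_err {a b m : ℝ}
    (hYhat : ∀ n i ω, Yhat n i ω ∈ Set.Icc (0 : ℝ) 1)
    (hX : ∀ i ω, |X i ω - a| ≤ 1)
    (hXerr : TendstoInMeasure μ (fun n ω => sampleMean n fun i => |Xhat n i ω - X i ω|) atTop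
      (fun _ => 0))
    (hYerr : TendstoInMeasure μ (fun n ω => sampleMean n fun i => |Yhat n i ω - Y i ω|) atTop
      (fun _ => 0))
    (hXa : TendstoInMeasure μ (fun n ω => sampleMean n fun i => X i ω) atTop (fun _ => a))
    (hYb : TendstoInMeasure μ (fun n ω => sampleMean n fun i => Y i ω) atTop (fun _ => b))
    (hXY : TendstoInMeasure μ (fun n ω => sampleMean n fun i => (X i ω - a) * (Y i ω - b))
      atTop (fun _ => m)) :
    TendstoInMeasure μ (fun n ω => sampleCov n (Xhat n · ω) (Yhat n · ω)) atTop (fun _ => m) :=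
  tendstoInMeasure_sampleMean_centered_mul_of_err
    (fun n i ω => abs_sub_le_one_of_mem_Icc (hYhat n i ω) (sampleMean_mem_Icc (hYhat n · ω)))
    hX hXerr hYerr (tendstoInMeasure_sampleMean_of_err hXa hXerr)
    (tendstoInMeasure_sampleMean_of_err hYb hYerr) hXY

theorem tendstoInMeasure_sampleCov_div_sampleCov {c v : ℝ} (hv : v ≠ 0)
    (hXY : TendstoInMeasure μ (fun n ω => sampleCov n (Xhat n · ω) (Yhat n · ω)) atTop
      (fun _ => c))
    (hYY : TendstoInMeasure μ (fun n ω => sampleCov n (Yhat n · ω) (Yhat n · ω)) atTop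
      (fun _ => v)) :
    TendstoInMeasure μ (fun n ω =>
      (∑ i ∈ Finset.range n, (Xhat n i ω - (∑ j ∈ Finset.range n, Xhat n j ω) / n) *
          (Yhat n i ω - (∑ j ∈ Finset.range n, Yhat n j ω) / n)) /
        ∑ i ∈ Finset.range n, (Yhat n i ω - (∑ j ∈ Finset.range n, Yhat n j ω) / n) ^ 2)
      atTop (fun _ => c / v) :=
  (hXY.comp₂_of_continuousAt (φ := (· / ·)) (continuousAt_fst.div continuousAt_snd hv)
    hYY).congr' ((eventually_ne_atTop 0).mono fun _ hn => ae_of_all _ fun _ =>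
      sampleCov_div_sampleCov hn) EventuallyEq.rfl

theorem tendstoInMeasure_sampleCov_div_sqrt_mul_sampleCov {c u v : ℝ} (huv : 0 < u * v)
    (hXY : TendstoInMeasure μ (fun n ω => sampleCov n (Xhat n · ω) (Yhat n · ω)) atTop
      (fun _ => c))
    (hXX : TendstoInMeasure μ (fun n ω => sampleCov n (Xhat n · ω) (Xhat n · ω)) atTop
      (fun _ => u))
    (hYY : TendstoInMeasure μ (fun n ω => sampleCov n (Yhat n · ω) (Yhat n · ω)) atTop
      (fun _ => v)) :
    TendstoInMeasure μ (fun n ω =>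
      (∑ i ∈ Finset.range n, (Xhat n i ω - (∑ j ∈ Finset.range n, Xhat n j ω) / n) *
          (Yhat n i ω - (∑ j ∈ Finset.range n, Yhat n j ω) / n)) /
        √((∑ i ∈ Finset.range n, (Xhat n i ω - (∑ j ∈ Finset.range n, Xhat n j ω) / n) ^ 2) *
          ∑ i ∈ Finset.range n, (Yhat n i ω - (∑ j ∈ Finset.range n, Yhat n j ω) / n) ^ 2))
      atTop (fun _ => c / √(u * v)) :=
  (hXY.comp₂_of_continuousAt (φ := fun c w => c / √w)
    (continuousAt_fst.div (by fun_prop) (Real.sqrt_pos.2 huv).ne')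
    (hXX.comp₂_of_continuousAt (φ := (· * ·)) continuous_mul.continuousAt hYY)).congr'
      ((eventually_ne_atTop 0).mono fun _ hn => ae_of_all _ fun _ =>
        sampleCov_div_sqrt_mul_sampleCov hn) EventuallyEq.rfl

end Probability
theorem crrr_estimators_consistent_general {Ω : Type*} [MeasureSpace Ω]
    [IsProbabilityMeasure (ℙ : Measure Ω)]
    (U V : ℕ → Ω → ℝ)
    (hrange : ∀ i ω, U i ω ∈ Set.Icc (0 : ℝ) 1 ∧ V i ω ∈ Set.Icc (0 : ℝ) 1)
    (hindep : iIndepFun (fun i ω => (U i ω, V i ω)) ℙ)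
    (hident : ∀ i, IdentDistrib (fun ω => (U i ω, V i ω)) (fun ω => (U 0 ω, V 0 ω)) ℙ ℙ)
    (hEU : ∫ ω, U 0 ω ∂ℙ = 1 / 2) (hEV : ∫ ω, V 0 ω ∂ℙ = 1 / 2)
    (hVarU : ∫ ω, ((U 0 ω - 1 / 2) ^ 2) ∂ℙ = 1 / 12)
    (hVarV : ∫ ω, ((V 0 ω - 1 / 2) ^ 2) ∂ℙ = 1 / 12)
    (ρC : ℝ) (hρC : ρC = 12 * ∫ ω, ((U 0 ω - 1 / 2) * (V 0 ω - 1 / 2)) ∂ℙ)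
    (Uhat Vhat : ℕ → ℕ → Ω → ℝ)
    (hhatrange : ∀ n i ω, Uhat n i ω ∈ Set.Icc (0 : ℝ) 1 ∧ Vhat n i ω ∈ Set.Icc (0 : ℝ) 1)
    (hUerr : ∀ ε > (0 : ℝ), Tendsto (fun (n : ℕ) =>
      ℙ {ω | ε < (∑ i ∈ Finset.range n, |Uhat n i ω - U i ω|) / n}) atTop (𝓝 0))
    (hVerr : ∀ ε > (0 : ℝ), Tendsto (fun (n : ℕ) =>
      ℙ {ω | ε < (∑ i ∈ Finset.range n, |Vhat n i ω - V i ω|) / n}) atTop (𝓝 0)) :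
    (∀ ε > (0 : ℝ), Tendsto (fun (n : ℕ) =>
      ℙ {ω | ε < |(∑ i ∈ Finset.range n,
            (Uhat n i ω - (∑ j ∈ Finset.range n, Uhat n j ω) / n) *
              (Vhat n i ω - (∑ j ∈ Finset.range n, Vhat n j ω) / n)) /
          (∑ i ∈ Finset.range n,
            (Vhat n i ω - (∑ j ∈ Finset.range n, Vhat n j ω) / n) ^ 2) - ρC|})
      atTop (𝓝 0)) ∧
    (∀ ε > (0 : ℝ), Tendsto (fun (n : ℕ) =>
      ℙ {ω | ε < |(∑ i ∈ Finset.range n,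
            (Uhat n i ω - (∑ j ∈ Finset.range n, Uhat n j ω) / n) *
              (Vhat n i ω - (∑ j ∈ Finset.range n, Vhat n j ω) / n)) /
          Real.sqrt ((∑ i ∈ Finset.range n,
              (Uhat n i ω - (∑ j ∈ Finset.range n, Uhat n j ω) / n) ^ 2) *
            (∑ i ∈ Finset.range n,
              (Vhat n i ω - (∑ j ∈ Finset.range n, Vhat n j ω) / n) ^ 2)) - ρC|})
      atTop (𝓝 0)) ∧
    (∀ ε > (0 : ℝ), Tendsto (fun (n : ℕ) =>
      ℙ {ω | ε < |(12 / (n : ℝ)) * (∑ i ∈ Finset.range n,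
          (Uhat n i ω - 1 / 2) * (Vhat n i ω - 1 / 2)) - ρC|}) atTop (𝓝 0)) := by
  have hslln : ∀ φ : ℝ × ℝ → ℝ, Continuous φ → TendstoInMeasure ℙ
      (fun n ω => sampleMean n fun i => φ (U i ω, V i ω)) atTop
      (fun _ => ∫ ω, φ (U 0 ω, V 0 ω) ∂ℙ) := fun φ hφ =>
    tendstoInMeasure_sampleMean_comp_of_iIndepFun hindep hident
      (isCompact_Icc.prod isCompact_Icc) (ae_of_all _ fun ω => hrange 0 ω) hφ
  have hU := hslln Prod.fst continuous_fst
  have hV := hslln Prod.snd continuous_snd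
  have hUU := hslln (fun p => (p.1 - 1 / 2) * (p.1 - 1 / 2)) (by fun_prop)
  have hVV := hslln (fun p => (p.2 - 1 / 2) * (p.2 - 1 / 2)) (by fun_prop)
  have hUV : TendstoInMeasure ℙ
      (fun n ω => sampleMean n fun i => (U i ω - 1 / 2) * (V i ω - 1 / 2)) atTop
      (fun _ => ρC / 12) := by
    simpa [hρC] using hslln (fun p => (p.1 - 1 / 2) * (p.2 - 1 / 2)) (by fun_prop)
  simp only [sq] at hVarU hVarV
  simp only [hEU, hEV, hVarU, hVarV] at hU hV hUU hVV
  have hUerr' := (tendstoInMeasure_zero_iff_lt_of_nonneg fun n ω =>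
    sampleMean_nonneg fun i => abs_nonneg (Uhat n i ω - U i ω)).2 hUerr
  have hVerr' := (tendstoInMeasure_zero_iff_lt_of_nonneg fun n ω =>
    sampleMean_nonneg fun i => abs_nonneg (Vhat n i ω - V i ω)).2 hVerr
  have half_mem : (1 / 2 : ℝ) ∈ Set.Icc (0 : ℝ) 1 := by norm_num
  have hU_half i ω := abs_sub_le_one_of_mem_Icc (hrange i ω).1 half_mem
  have hV_half i ω := abs_sub_le_one_of_mem_Icc (hrange i ω).2 half_mem
  have hSUV := tendstoInMeasure_sampleCov_of_err (fun n i ω => (hhatrange n i ω).2) hU_half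
    hUerr' hVerr' hU hV hUV
  have hSUU := tendstoInMeasure_sampleCov_of_err (fun n i ω => (hhatrange n i ω).1) hU_half
    hUerr' hUerr' hU hU hUU
  have hSVV := tendstoInMeasure_sampleCov_of_err (fun n i ω => (hhatrange n i ω).2) hV_half
    hVerr' hVerr' hV hV hVV
  have hShalf := tendstoInMeasure_sampleMean_centered_mul_of_err (C := fun _ _ => 1 / 2)
    (D := fun _ _ => 1 / 2) (fun n i ω => abs_sub_le_one_of_mem_Icc (hhatrange n i ω).2 half_mem)
    hU_half hUerr' hVerr' (tendstoInMeasure_const _) (tendstoInMeasure_const _) hUV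
  refine ⟨tendstoInMeasure_const_iff_lt.1 ?_, tendstoInMeasure_const_iff_lt.1 ?_,
    tendstoInMeasure_const_iff_lt.1 ?_⟩
  · exact (tendstoInMeasure_sampleCov_div_sampleCov (by norm_num) hSUV hSVV).congr_right
      (ae_of_all _ fun _ => by ring)
  · exact (tendstoInMeasure_sampleCov_div_sqrt_mul_sampleCov (by norm_num) hSUV hSUU
      hSVV).congr_right (ae_of_all _ fun _ => by norm_num; ring)
  · exact (hShalf.comp_of_continuousAt (φ := (12 * ·)) (by fun_prop)).congr'
      (Eventually.of_forall fun n => ae_of_all _ fun ω => by simp only [sampleMean]; ring)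
      (ae_of_all _ fun _ => by ring)

/-- consistency of the three CRRR slope estimators. Let `(U_i, V_i)` be
i.i.d. `[0,1]²`-valued with `E[U₁] = E[V₁] = 1/2`, `Var(U₁) = Var(V₁) = 1/12` (written as
`E[(U₁−1/2)²] = E[(V₁−1/2)²] = 1/12`), and `ρ_C = 12·E[(U₁−1/2)(V₁−1/2)]`. If the average
absolute errors of the estimated ranks `Û, V̂` tend to `0` in probability, then the OLS
slope, the sample correlation, and the covariance-form estimator all converge in
probability to `ρ_C`. -/
theorem crrr_estimators_consistent {Ω : Type*} [MeasureSpace Ω]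
    [IsProbabilityMeasure (ℙ : Measure Ω)]
    (U V : ℕ → Ω → ℝ) (hUmeas : ∀ i, Measurable (U i)) (hVmeas : ∀ i, Measurable (V i))
    (hrange : ∀ i ω, U i ω ∈ Set.Icc (0 : ℝ) 1 ∧ V i ω ∈ Set.Icc (0 : ℝ) 1)
    (hindep : iIndepFun (fun i ω => (U i ω, V i ω)) ℙ)
    (hident : ∀ i, IdentDistrib (fun ω => (U i ω, V i ω)) (fun ω => (U 0 ω, V 0 ω)) ℙ ℙ)
    (hEU : ∫ ω, U 0 ω ∂ℙ = 1 / 2) (hEV : ∫ ω, V 0 ω ∂ℙ = 1 / 2)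
    (hVarU : ∫ ω, ((U 0 ω - 1 / 2) ^ 2) ∂ℙ = 1 / 12)
    (hVarV : ∫ ω, ((V 0 ω - 1 / 2) ^ 2) ∂ℙ = 1 / 12)
    (ρC : ℝ) (hρC : ρC = 12 * ∫ ω, ((U 0 ω - 1 / 2) * (V 0 ω - 1 / 2)) ∂ℙ)
    (Uhat Vhat : ℕ → ℕ → Ω → ℝ)
    (hhatrange : ∀ n i ω, Uhat n i ω ∈ Set.Icc (0 : ℝ) 1 ∧ Vhat n i ω ∈ Set.Icc (0 : ℝ) 1)
    (hUerr : ∀ ε > (0 : ℝ), Tendsto (fun (n : ℕ) =>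
      ℙ {ω | ε < (∑ i ∈ Finset.range n, |Uhat n i ω - U i ω|) / n}) atTop (𝓝 0))
    (hVerr : ∀ ε > (0 : ℝ), Tendsto (fun (n : ℕ) =>
      ℙ {ω | ε < (∑ i ∈ Finset.range n, |Vhat n i ω - V i ω|) / n}) atTop (𝓝 0)) :
    (∀ ε > (0 : ℝ), Tendsto (fun (n : ℕ) =>
      ℙ {ω | ε < |(∑ i ∈ Finset.range n,
            (Uhat n i ω - (∑ j ∈ Finset.range n, Uhat n j ω) / n) *
              (Vhat n i ω - (∑ j ∈ Finset.range n, Vhat n j ω) / n)) /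
          (∑ i ∈ Finset.range n,
            (Vhat n i ω - (∑ j ∈ Finset.range n, Vhat n j ω) / n) ^ 2) - ρC|})
      atTop (𝓝 0)) ∧
    (∀ ε > (0 : ℝ), Tendsto (fun (n : ℕ) =>
      ℙ {ω | ε < |(∑ i ∈ Finset.range n,
            (Uhat n i ω - (∑ j ∈ Finset.range n, Uhat n j ω) / n) *
              (Vhat n i ω - (∑ j ∈ Finset.range n, Vhat n j ω) / n)) /
          Real.sqrt ((∑ i ∈ Finset.range n,
              (Uhat n i ω - (∑ j ∈ Finset.range n, Uhat n j ω) / n) ^ 2) *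
            (∑ i ∈ Finset.range n,
              (Vhat n i ω - (∑ j ∈ Finset.range n, Vhat n j ω) / n) ^ 2)) - ρC|})
      atTop (𝓝 0)) ∧
    (∀ ε > (0 : ℝ), Tendsto (fun (n : ℕ) =>
      ℙ {ω | ε < |(12 / (n : ℝ)) * (∑ i ∈ Finset.range n,
          (Uhat n i ω - 1 / 2) * (Vhat n i ω - 1 / 2)) - ρC|}) atTop (𝓝 0)) :=
  crrr_estimators_consistent_general U V hrange hindep hident hEU hEV hVarU hVarV ρC hρC Uhat Vhat
    hhatrange hUerr hVerr
end
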